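/- Let H and H̃ be d×d symmetric positive definite real matrices with (1−ε)H ⪯ H̃ ⪯ (1+ε)H for some ε ∈ (0, 1), let g ∈ ℝ^d, and define φ(p) = pᵀHp − 2pᵀg with minimizer p* = H⁻¹g. Let p̃ = H̃⁻¹g, let ε₀ ∈ (0, 1) with ε + ε₀ < 1, and suppose p̃′ ∈ ℝ^d satisfies ‖H̃^{1/2}(p̃′ − p̃)‖₂ ≤ ε₀·‖H̃^{1/2}p̃‖₂. Then min_p φ(p) ≤ φ(p̃′) ≤ (1 − α₀²)·min_p φ(p), where α₀ = (ε + ε₀)/(1 − ε − ε₀). -/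

import Mathlib

open Matrix

noncomputable section

open scoped ComplexOrder in
/-- The positive semidefinite square root of a positive semidefinite matrix
(the definition from the older Mathlib, removed since). -/
def Matrix.PosSemidef.sqrt {n 𝕜 : Type*} [Fintype n] [RCLike 𝕜] [DecidableEq n]
    {A : Matrix n n 𝕜} (hA : A.PosSemidef) : Matrix n n 𝕜 :=
  hA.1.eigenvectorUnitary.1 * diagonal ((↑) ∘ (√·) ∘ hA.1.eigenvalues) *
  (star hA.1.eigenvectorUnitary : Matrix n n 𝕜)

/-- The Euclidean (ℓ2) norm of a vector in `ℝ^d`. -/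
def norm2 {d : ℕ} (x : Fin d → ℝ) : ℝ := Real.sqrt (x ⬝ᵥ x)

/-!
Write `‖x‖_M = √(xᵀMx)`. Completing the square, `φ p = ‖p - p*‖²_H - ‖p*‖²_H`, so everything
reduces to `‖p̃′ - p*‖_H ≤ α₀ ‖p*‖_H`. With `c = √(1 - ε)` the lower Loewner bound reads
`c‖x‖_H ≤ ‖x‖_H̃`, and polarizing `-εH ⪯ H - H̃ ⪯ εH` gives `xᵀ(H - H̃)y ≤ ε‖x‖_H‖y‖_H`.
Since `H̃(p̃ - p*) = (H - H̃)p*` and `H̃p̃ = Hp*`, these give `c‖p̃ - p*‖_H̃ ≤ ε‖p*‖_H` and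
`c‖p̃‖_H̃ ≤ ‖p*‖_H`. The triangle inequality in `‖·‖_H̃` and the stopping criterion then yield
`(1 - ε)‖p̃′ - p*‖_H ≤ (ε + ε₀)‖p*‖_H`.
-/

theorem mul_le_of_sq_le_mul_of_mul_le {a b c K : ℝ} (ha : 0 ≤ a) (hK : 0 ≤ K)
    (hc : 0 ≤ c) (hsq : a ^ 2 ≤ K * b) (hb : c * b ≤ a) : c * a ≤ K := by
  rcases ha.eq_or_lt with rfl | ha
  · simpa using hK
  · refine le_of_mul_le_mul_right ?_ ha
    nlinarith

namespace Matrix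

section EnergyNorm

variable {n : Type*}

theorem PosSemidef.isSymm {M : Matrix n n ℝ} (hM : M.PosSemidef) : M.IsSymm :=
  isHermitian_iff_isSymm.mp hM.isHermitian

variable [Fintype n]

def energyNorm (M : Matrix n n ℝ) (x : n → ℝ) : ℝ := √(x ⬝ᵥ (M *ᵥ x))

theorem energyNorm_nonneg (M : Matrix n n ℝ) (x : n → ℝ) : 0 ≤ energyNorm M x :=
  Real.sqrt_nonneg _

@[simp]
theorem energyNorm_zero (M : Matrix n n ℝ) : energyNorm M 0 = 0 := by
  simp [energyNorm]

theorem PosSemidef.dotProduct_mulVec_self_nonneg {M : Matrix n n ℝ} (hM : M.PosSemidef)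
    (x : n → ℝ) : 0 ≤ x ⬝ᵥ (M *ᵥ x) := by
  simpa using hM.dotProduct_mulVec_nonneg x

theorem PosSemidef.energyNorm_sq {M : Matrix n n ℝ} (hM : M.PosSemidef) (x : n → ℝ) :
    energyNorm M x ^ 2 = x ⬝ᵥ (M *ᵥ x) :=
  Real.sq_sqrt (hM.dotProduct_mulVec_self_nonneg x)

theorem IsSymm.dotProduct_mulVec_comm {B : Matrix n n ℝ} (hB : B.IsSymm) (x y : n → ℝ) :
    y ⬝ᵥ (B *ᵥ x) = x ⬝ᵥ (B *ᵥ y) := by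
  rw [dotProduct_mulVec, ← vecMul_transpose, hB.eq, dotProduct_comm]

/-- Polarization: `4t·xᵀBy = q_B(tx + y) - q_B(tx - y) ≤ q_M(tx + y) + q_M(tx - y)
= 2(t²·q_M(x) + q_M(y))` for every `t`, so the discriminant in `t` is nonpositive. -/
theorem sq_dotProduct_mulVec_le_of_abs_le {B M : Matrix n n ℝ} (hB : B.IsSymm)
    (hBM : ∀ x, |x ⬝ᵥ (B *ᵥ x)| ≤ x ⬝ᵥ (M *ᵥ x)) (x y : n → ℝ) :
    (x ⬝ᵥ (B *ᵥ y)) ^ 2 ≤ (x ⬝ᵥ (M *ᵥ x)) * (y ⬝ᵥ (M *ᵥ y)) := by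
  have hquad : ∀ t : ℝ,
      0 ≤ (x ⬝ᵥ (M *ᵥ x)) * (t * t) + (-2 * x ⬝ᵥ (B *ᵥ y)) * t + y ⬝ᵥ (M *ᵥ y) := by
    intro t
    have hplus := (abs_le.mp (hBM (t • x + y))).2
    have hminus := (abs_le.mp (hBM (t • x - y))).1
    simp only [mulVec_add, mulVec_sub, mulVec_smul, dotProduct_add, dotProduct_sub,
      add_dotProduct, sub_dotProduct, dotProduct_smul, smul_dotProduct, smul_eq_mul,
      hB.dotProduct_mulVec_comm x y] at hplus hminus
    nlinarith
  have hdisc := discrim_le_zero hquad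
  rw [discrim] at hdisc
  nlinarith

theorem dotProduct_mulVec_le_of_abs_le {B M : Matrix n n ℝ} {ε : ℝ} (hε : 0 ≤ ε)
    (hM : M.PosSemidef) (hB : B.IsSymm) (hBM : ∀ x, |x ⬝ᵥ (B *ᵥ x)| ≤ ε * (x ⬝ᵥ (M *ᵥ x)))
    (x y : n → ℝ) : x ⬝ᵥ (B *ᵥ y) ≤ ε * (energyNorm M x * energyNorm M y) := by
  have hsq := sq_dotProduct_mulVec_le_of_abs_le (M := ε • M) hB
    (by simpa only [smul_mulVec, dotProduct_smul, smul_eq_mul] using hBM) x y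
  refine le_of_abs_le (abs_le_of_sq_le_sq ?_ (mul_nonneg hε (mul_nonneg (energyNorm_nonneg M x)
    (energyNorm_nonneg M y))))
  calc (x ⬝ᵥ (B *ᵥ y)) ^ 2 ≤ (x ⬝ᵥ ((ε • M) *ᵥ x)) * (y ⬝ᵥ ((ε • M) *ᵥ y)) := hsq
    _ = (ε * (energyNorm M x * energyNorm M y)) ^ 2 := by
      simp only [mul_pow, hM.energyNorm_sq, smul_mulVec, dotProduct_smul, smul_eq_mul]
      ring

theorem PosSemidef.dotProduct_mulVec_le {M : Matrix n n ℝ} (hM : M.PosSemidef) (x y : n → ℝ) :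
    x ⬝ᵥ (M *ᵥ y) ≤ energyNorm M x * energyNorm M y := by
  simpa using dotProduct_mulVec_le_of_abs_le zero_le_one hM hM.isSymm
    (fun z => by rw [one_mul, abs_of_nonneg (hM.dotProduct_mulVec_self_nonneg z)]) x y

theorem PosSemidef.energyNorm_add_le {M : Matrix n n ℝ} (hM : M.PosSemidef) (x y : n → ℝ) :
    energyNorm M (x + y) ≤ energyNorm M x + energyNorm M y := by
  refine le_of_abs_le (abs_le_of_sq_le_sq ?_ (add_nonneg (energyNorm_nonneg M x)
    (energyNorm_nonneg M y)))
  have hxy := hM.dotProduct_mulVec_le x y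
  have hyx := hM.dotProduct_mulVec_le y x
  rw [hM.energyNorm_sq, add_sq, hM.energyNorm_sq, hM.energyNorm_sq]
  simp only [mulVec_add, dotProduct_add, add_dotProduct]
  linarith

theorem energyNorm_le_of_posSemidef_sub {M N : Matrix n n ℝ} {c : ℝ} (hc : 0 ≤ c)
    (h : (N - c • M).PosSemidef) (x : n → ℝ) : √c * energyNorm M x ≤ energyNorm N x := by
  rw [energyNorm, energyNorm, ← Real.sqrt_mul hc]
  refine Real.sqrt_le_sqrt ?_
  have hx := h.dotProduct_mulVec_self_nonneg x
  simp only [sub_mulVec, smul_mulVec, dotProduct_sub, dotProduct_smul, smul_eq_mul] at hx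
  linarith

theorem abs_dotProduct_sub_mulVec_le {M N : Matrix n n ℝ} {ε : ℝ}
    (hlow : (N - (1 - ε) • M).PosSemidef) (hup : ((1 + ε) • M - N).PosSemidef) (x : n → ℝ) :
    |x ⬝ᵥ ((M - N) *ᵥ x)| ≤ ε * (x ⬝ᵥ (M *ᵥ x)) := by
  have hl := hlow.dotProduct_mulVec_self_nonneg x
  have hu := hup.dotProduct_mulVec_self_nonneg x
  simp only [sub_mulVec, smul_mulVec, dotProduct_sub, dotProduct_smul, smul_eq_mul] at hl hu ⊢
  rw [abs_le]
  constructor <;> linarith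

theorem dotProduct_mulVec_sub_two_mul_dotProduct {M : Matrix n n ℝ} (hM : M.IsSymm)
    {p g : n → ℝ} (hp : M *ᵥ p = g) (x : n → ℝ) :
    x ⬝ᵥ (M *ᵥ x) - 2 * (x ⬝ᵥ g) = (x - p) ⬝ᵥ (M *ᵥ (x - p)) - p ⬝ᵥ (M *ᵥ p) := by
  have hpx := hM.dotProduct_mulVec_comm p x
  simp only [mulVec_sub, dotProduct_sub, sub_dotProduct, hp] at hpx ⊢
  rw [hpx]
  ring

end EnergyNorm

section Solutions

variable {n : Type*} [Fintype n] {M N : Matrix n n ℝ} {g p q : n → ℝ} {c : ℝ}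

theorem energyNorm_solution_le (hM : M.PosSemidef) (hN : N.PosSemidef) (hc : 0 ≤ c)
    (hlow : ∀ x, c * energyNorm M x ≤ energyNorm N x) (hp : M *ᵥ p = g) (hq : N *ᵥ q = g) :
    c * energyNorm N q ≤ energyNorm M p := by
  refine mul_le_of_sq_le_mul_of_mul_le (energyNorm_nonneg N q) (energyNorm_nonneg M p) hc
    ?_ (hlow q)
  calc energyNorm N q ^ 2 = q ⬝ᵥ (M *ᵥ p) := by rw [hN.energyNorm_sq, hq, hp]
    _ ≤ energyNorm M q * energyNorm M p := hM.dotProduct_mulVec_le q p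
    _ = energyNorm M p * energyNorm M q := mul_comm _ _

theorem energyNorm_solution_sub_le (hN : N.PosSemidef) {ε : ℝ} (hε : 0 ≤ ε) (hc : 0 ≤ c)
    (hlow : ∀ x, c * energyNorm M x ≤ energyNorm N x)
    (hpert : ∀ x y, x ⬝ᵥ ((M - N) *ᵥ y) ≤ ε * (energyNorm M x * energyNorm M y))
    (hp : M *ᵥ p = g) (hq : N *ᵥ q = g) :
    c * energyNorm N (q - p) ≤ ε * energyNorm M p := by
  refine mul_le_of_sq_le_mul_of_mul_le (energyNorm_nonneg N _)
    (mul_nonneg hε (energyNorm_nonneg M p)) hc ?_ (hlow (q - p))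
  calc energyNorm N (q - p) ^ 2 = (q - p) ⬝ᵥ ((M - N) *ᵥ p) := by
        rw [hN.energyNorm_sq, mulVec_sub N, hq, sub_mulVec, hp]
    _ ≤ ε * (energyNorm M (q - p) * energyNorm M p) := hpert _ _
    _ = ε * energyNorm M p * energyNorm M (q - p) := by ring

theorem energyNorm_inexact_solution_sub_le (hM : M.PosSemidef) (hN : N.PosSemidef) {ε ε₀ : ℝ}
    (hε : 0 ≤ ε) (hε₀ : 0 ≤ ε₀) (hc : 0 ≤ c) (hlow : ∀ x, c * energyNorm M x ≤ energyNorm N x)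
    (hpert : ∀ x y, x ⬝ᵥ ((M - N) *ᵥ y) ≤ ε * (energyNorm M x * energyNorm M y))
    (hp : M *ᵥ p = g) (hq : N *ᵥ q = g) {q' : n → ℝ}
    (hq' : energyNorm N (q' - q) ≤ ε₀ * energyNorm N q) :
    c ^ 2 * energyNorm M (q' - p) ≤ (ε + ε₀) * energyNorm M p := by
  have hexact := energyNorm_solution_sub_le hN hε hc hlow hpert hp hq
  have hsol := energyNorm_solution_le hM hN hc hlow hp hq
  have htri := hN.energyNorm_add_le (q' - q) (q - p)
  rw [sub_add_sub_cancel] at htri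
  calc c ^ 2 * energyNorm M (q' - p) = c * (c * energyNorm M (q' - p)) := by ring
    _ ≤ c * energyNorm N (q' - p) := by gcongr; exact hlow _
    _ ≤ c * (energyNorm N (q' - q) + energyNorm N (q - p)) := by gcongr
    _ ≤ c * (ε₀ * energyNorm N q + energyNorm N (q - p)) := by gcongr
    _ = ε₀ * (c * energyNorm N q) + c * energyNorm N (q - p) := by ring
    _ ≤ ε₀ * energyNorm M p + ε * energyNorm M p := by gcongr
    _ = (ε + ε₀) * energyNorm M p := by ring

end Solutions

section Sqrt

variable {n : Type*} [Fintype n] [DecidableEq n]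

theorem PosSemidef.sqrt_eq_cfc {M : Matrix n n ℝ} (hM : M.PosSemidef) :
    hM.sqrt = cfc Real.sqrt M :=
  (hM.isHermitian.cfc_eq _).symm

open scoped MatrixOrder in
theorem PosSemidef.sqrt_mul_sqrt {M : Matrix n n ℝ} (hM : M.PosSemidef) :
    hM.sqrt * hM.sqrt = M := by
  rw [hM.sqrt_eq_cfc, ← cfc_mul Real.sqrt Real.sqrt M]
  conv_rhs => rw [← cfc_id' ℝ M]
  exact cfc_congr fun x hx => Real.mul_self_sqrt (spectrum_nonneg_of_nonneg hM.nonneg hx)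

theorem PosSemidef.transpose_sqrt {M : Matrix n n ℝ} (hM : M.PosSemidef) :
    hM.sqrtᵀ = hM.sqrt := by
  rw [hM.sqrt_eq_cfc, ← conjTranspose_eq_transpose_of_trivial]
  exact (cfc_predicate _ M : IsSelfAdjoint _).star_eq

end Sqrt

theorem PosDef.mulVec_inv_mulVec {n : Type*} [Fintype n] [DecidableEq n] {M : Matrix n n ℝ}
    (hM : M.PosDef) (v : n → ℝ) : M *ᵥ (M⁻¹ *ᵥ v) = v := by
  rw [mulVec_mulVec, mul_nonsing_inv M ((isUnit_iff_isUnit_det M).mp hM.isUnit), one_mulVec]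

end Matrix

open Matrix

theorem norm2_sqrt_mulVec {d : ℕ} {M : Matrix (Fin d) (Fin d) ℝ} (hM : M.PosSemidef)
    (v : Fin d → ℝ) : norm2 (hM.sqrt *ᵥ v) = energyNorm M v := by
  have hvS : v ᵥ* hM.sqrt = hM.sqrt *ᵥ v := by rw [← vecMul_transpose, hM.transpose_sqrt]
  rw [norm2, energyNorm]
  nth_rw 1 [← hvS]
  rw [← dotProduct_mulVec, mulVec_mulVec, hM.sqrt_mul_sqrt]

/-- the Inexact Solution lemma for sub-sampled Newton. An inexact solution
`p̃′` of `H̃p = g` meeting the relative stopping criterion still nearly minimizes the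
auxiliary quadratic `φ(p) = pᵀHp − 2pᵀg`, with `α₀ = (ε + ε₀)/(1 − ε − ε₀)`. -/
theorem inexact_newton_direction_suboptimality {d : ℕ}
    (H Htil : Matrix (Fin d) (Fin d) ℝ) (hH : H.PosDef) (hHtil : Htil.PosDef)
    (ε : ℝ) (hε : 0 < ε ∧ ε < 1)
    (happrox : (Htil - (1 - ε) • H).PosSemidef ∧ ((1 + ε) • H - Htil).PosSemidef)
    (g : Fin d → ℝ)
    (ε₀ : ℝ) (hε₀ : 0 < ε₀ ∧ ε₀ < 1) (hsum : ε + ε₀ < 1)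
    (ptil' : Fin d → ℝ)
    (hstop : norm2 (hHtil.posSemidef.sqrt *ᵥ (ptil' - Htil⁻¹ *ᵥ g)) ≤
      ε₀ * norm2 (hHtil.posSemidef.sqrt *ᵥ (Htil⁻¹ *ᵥ g))) :
    let φ : (Fin d → ℝ) → ℝ := fun p => p ⬝ᵥ (H *ᵥ p) - 2 * (p ⬝ᵥ g)
    let pstar : Fin d → ℝ := H⁻¹ *ᵥ g
    let α₀ : ℝ := (ε + ε₀) / (1 - ε - ε₀)
    (∀ p, φ pstar ≤ φ p) ∧ φ pstar ≤ φ ptil' ∧ φ ptil' ≤ (1 - α₀ ^ 2) * φ pstar := by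
  intro φ pstar α₀
  set R := energyNorm H pstar
  have hpstar : H *ᵥ pstar = g := hH.mulVec_inv_mulVec g
  have hpert : ∀ x y, x ⬝ᵥ ((H - Htil) *ᵥ y) ≤ ε * (energyNorm H x * energyNorm H y) :=
    dotProduct_mulVec_le_of_abs_le hε.1.le hH.posSemidef
      (hH.posSemidef.isSymm.sub hHtil.posSemidef.isSymm)
      (abs_dotProduct_sub_mulVec_le happrox.1 happrox.2)
  have herr : √(1 - ε) ^ 2 * energyNorm H (ptil' - pstar) ≤ (ε + ε₀) * R :=
    energyNorm_inexact_solution_sub_le hH.posSemidef hHtil.posSemidef hε.1.le hε₀.1.le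
      (Real.sqrt_nonneg _) (energyNorm_le_of_posSemidef_sub (by linarith) happrox.1) hpert
      hpstar (hHtil.mulVec_inv_mulVec g) (by simpa only [norm2_sqrt_mulVec] using hstop)
  rw [Real.sq_sqrt (by linarith)] at herr
  have hα : energyNorm H (ptil' - pstar) ≤ α₀ * R := by
    rw [div_mul_eq_mul_div, le_div_iff₀ (by linarith)]
    linarith [mul_nonneg hε₀.1.le (energyNorm_nonneg H (ptil' - pstar))]
  have hφ : ∀ p, φ p = energyNorm H (p - pstar) ^ 2 - R ^ 2 := fun p => by
    rw [hH.posSemidef.energyNorm_sq, hH.posSemidef.energyNorm_sq]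
    exact dotProduct_mulVec_sub_two_mul_dotProduct hH.posSemidef.isSymm hpstar p
  have hφstar : φ pstar = -R ^ 2 := by simp [hφ]
  have hmin : ∀ p, φ pstar ≤ φ p := fun p => by
    rw [hφstar, hφ]
    linarith [sq_nonneg (energyNorm H (p - pstar))]
  refine ⟨hmin, hmin ptil', ?_⟩
  rw [hφstar, hφ]
  linarith [pow_le_pow_left₀ (energyNorm_nonneg H _) hα 2]
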